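/- In an almost metrizable ω-narrow Hausdorff topological group G, the family 𝒩 of compact normal subgroups K with G/K metrizable is closed under countable intersections: if K_n ∈ 𝒩 for n ∈ ℕ, then ⋂ K_n ∈ 𝒩. -/

import Mathlib

/-!
In a Hausdorff space the neighbourhood filter of an intersection of compact sets is the infimum of
their neighbourhood filters, and for a compact subgroup `K` of a topological group the
neighbourhoods of `K` are exactly the preimages of neighbourhoods of the identity coset in `G ⧸ K`.
Hence the neighbourhood filter of the identity in `G ⧸ ⋂ Kₙ` is the image of a countable infimum
of countably generated filters, so it is countably generated, and a first countable Hausdorff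
group is metrizable (Birkhoff–Kakutani).
-/

open Filter Set Topology Pointwise

theorem IsCompact.nhdsSet_inter_biInter {X ι : Type*} [TopologicalSpace X] [T2Space X]
    {C : Set X} {K : ι → Set X} (hC : IsCompact C) (hK : ∀ i, IsCompact (K i)) (s : Finset ι) :
    𝓝ˢ (C ∩ ⋂ i ∈ s, K i) = 𝓝ˢ C ⊓ ⨅ i ∈ s, 𝓝ˢ (K i) := by
  classical
  induction s using Finset.induction_on generalizing C with
  | empty => simp
  | insert a s _ ih =>
    rw [Finset.set_biInter_insert, ← inter_assoc, ih (hC.inter (hK a)),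
      hC.nhdsSet_inter_eq (hK a), Finset.iInf_insert, inf_assoc]

theorem IsCompact.nhdsSet_iInter_eq {X ι : Type*} [TopologicalSpace X] [T2Space X]
    {K : ι → Set X} (hK : ∀ i, IsCompact (K i)) : 𝓝ˢ (⋂ i, K i) = ⨅ i, 𝓝ˢ (K i) := by
  rcases isEmpty_or_nonempty ι with hι | ⟨⟨i₀⟩⟩
  · simp [nhdsSet_univ, iInf_of_empty]
  refine le_antisymm (nhdsSet_iInter_le K) fun U hU => ?_
  obtain ⟨W, hWo, hKW, hWU⟩ := mem_nhdsSet_iff_exists.1 hU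
  obtain ⟨s, hs⟩ := ((hK i₀).inter_right hWo.isClosed_compl).elim_finite_subfamily_closed K
    (fun i => (hK i).isClosed) (by grind)
  have hsW : W ∈ 𝓝ˢ (K i₀ ∩ ⋂ i ∈ s, K i) := hWo.mem_nhdsSet.2 fun x hx => by
    by_contra hxW
    exact hs.subset ⟨⟨hx.1, hxW⟩, hx.2⟩
  rw [(hK i₀).nhdsSet_inter_biInter hK] at hsW
  have hle : ⨅ i, 𝓝ˢ (K i) ≤ 𝓝ˢ (K i₀) ⊓ ⨅ i ∈ s, 𝓝ˢ (K i) :=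
    le_inf (iInf_le _ i₀) (le_iInf₂ fun i _ => iInf_le _ i)
  exact hle (mem_of_superset hsW hWU)

theorem IsCompact.nhdsSet_hasBasis_mul {G : Type*} [Group G] [TopologicalSpace G]
    [IsTopologicalGroup G] {C : Set G} (hC : IsCompact C) :
    (𝓝ˢ C).HasBasis (· ∈ 𝓝 (1 : G)) (· * C) := by
  refine ⟨fun t => ⟨fun ht => ?_, fun ⟨W, hW, hWt⟩ => mem_of_superset ?_ hWt⟩⟩
  · obtain ⟨U, hUo, hCU, hUt⟩ := mem_nhdsSet_iff_exists.1 ht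
    obtain ⟨W, hW, hWU⟩ := compact_open_separated_mul_left hC hUo hCU
    exact ⟨W, hW, hWU.trans hUt⟩
  · refine mem_of_superset (isOpen_interior.mul_right.mem_nhdsSet.2 fun x hx => ?_)
      (mul_subset_mul_right interior_subset)
    exact ⟨1, mem_interior_iff_mem_nhds.2 hW, x, hx, one_mul x⟩

theorem Subgroup.nhdsSet_eq_comap_mk {G : Type*} [Group G] [TopologicalSpace G]
    [IsTopologicalGroup G] {K : Subgroup G} (hK : IsCompact (K : Set G)) :
    𝓝ˢ (K : Set G) = Filter.comap (QuotientGroup.mk : G → G ⧸ K) (𝓝 ((1 : G) : G ⧸ K)) := by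
  refine hK.nhdsSet_hasBasis_mul.eq_of_same_basis ?_
  rw [QuotientGroup.nhds_eq]
  simpa only [Function.comp_def, id, QuotientGroup.preimage_image_mk_eq_mul] using
    ((𝓝 (1 : G)).basis_sets.map ((↑) : G → G ⧸ K)).comap ((↑) : G → G ⧸ K)

theorem IsTopologicalGroup.metrizableSpace_of_isCountablyGenerated {G : Type*} [Group G]
    [TopologicalSpace G] [IsTopologicalGroup G] [T0Space G] [(𝓝 (1 : G)).IsCountablyGenerated] :
    TopologicalSpace.MetrizableSpace G := by
  let := IsTopologicalGroup.rightUniformSpace G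
  have : (uniformity G).IsCountablyGenerated := by
    rw [uniformity_eq_comap_nhds_one']
    infer_instance
  exact UniformSpace.metrizableSpace

theorem Subgroup.isCompact_iInf {G ι : Type*} [Group G] [TopologicalSpace G] [T2Space G]
    [Nonempty ι] {K : ι → Subgroup G} (hK : ∀ i, IsCompact (K i : Set G)) :
    IsCompact ((⨅ i, K i : Subgroup G) : Set G) := by
  obtain ⟨i₀⟩ := ‹Nonempty ι›
  rw [Subgroup.coe_iInf]
  exact (hK i₀).of_isClosed_subset (isClosed_iInter fun i => (hK i).isClosed) (iInter_subset _ i₀)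

theorem QuotientGroup.isCountablyGenerated_nhds_one_iInf {G ι : Type*} [Group G]
    [TopologicalSpace G] [IsTopologicalGroup G] [T2Space G] [Countable ι] [Nonempty ι]
    {K : ι → Subgroup G} (hK : ∀ i, IsCompact (K i : Set G))
    (hKc : ∀ i, (𝓝 ((1 : G) : G ⧸ K i)).IsCountablyGenerated) :
    (𝓝 ((1 : G) : G ⧸ ⨅ i, K i)).IsCountablyGenerated := by
  have hcomap : comap (↑) (𝓝 ((1 : G) : G ⧸ ⨅ i, K i)) =
      ⨅ i, comap ((↑) : G → G ⧸ K i) (𝓝 ((1 : G) : G ⧸ K i)) := by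
    simp_rw [← Subgroup.nhdsSet_eq_comap_mk (Subgroup.isCompact_iInf hK),
      ← Subgroup.nhdsSet_eq_comap_mk (hK _), Subgroup.coe_iInf, IsCompact.nhdsSet_iInter_eq hK]
  have : (comap ((↑) : G → G ⧸ ⨅ i, K i) (𝓝 ((1 : G) : G ⧸ ⨅ i, K i))).IsCountablyGenerated := by
    rw [hcomap]
    infer_instance
  rw [← map_comap_of_surjective QuotientGroup.mk_surjective (𝓝 _)]
  infer_instance

theorem countable_inter_of_compact_normal_metrizable_general {G : Type*} [Group G]
    [TopologicalSpace G] [IsTopologicalGroup G] [T2Space G]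
    (K : ℕ → Subgroup G)
    (hK : ∀ n, IsCompact ((K n : Set G)) ∧ (K n).Normal ∧
      TopologicalSpace.MetrizableSpace (G ⧸ K n)) :
    IsCompact ((⨅ n, K n : Subgroup G) : Set G) ∧ (⨅ n, K n : Subgroup G).Normal ∧
      TopologicalSpace.MetrizableSpace (G ⧸ (⨅ n, K n : Subgroup G)) := by
  have hcompact : ∀ n, IsCompact (K n : Set G) := fun n => (hK n).1
  have hN : IsCompact ((⨅ n, K n : Subgroup G) : Set G) := Subgroup.isCompact_iInf hcompact
  have hnormal : (⨅ n, K n).Normal := Subgroup.normal_iInf_normal fun n => (hK n).2.1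
  refine ⟨hN, hnormal, ?_⟩
  have : IsClosed ((⨅ n, K n : Subgroup G) : Set G) := hN.isClosed
  have : (𝓝 (1 : G ⧸ ⨅ n, K n)).IsCountablyGenerated :=
    QuotientGroup.isCountablyGenerated_nhds_one_iInf hcompact fun n =>
      have := (hK n).2.2
      inferInstance
  exact IsTopologicalGroup.metrizableSpace_of_isCountablyGenerated

/-- In an ω-narrow almost metrizable Hausdorff topological group, the family of compact
normal subgroups with metrizable quotient is closed under countable intersections. -/
theorem countable_inter_of_compact_normal_metrizable {G : Type*} [Group G]
    [TopologicalSpace G] [IsTopologicalGroup G] [T2Space G]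
    (hnarrow : ∀ U ∈ nhds (1 : G), ∃ A : Set G, A.Countable ∧ A * U = Set.univ)
    (halm : ∀ O ∈ nhds (1 : G), ∃ L : Subgroup G, (L : Set G) ⊆ O ∧
      IsCompact (L : Set G) ∧ TopologicalSpace.MetrizableSpace (G ⧸ L))
    (K : ℕ → Subgroup G)
    (hK : ∀ n, IsCompact ((K n : Set G)) ∧ (K n).Normal ∧
      TopologicalSpace.MetrizableSpace (G ⧸ K n)) :
    IsCompact ((⨅ n, K n : Subgroup G) : Set G) ∧ (⨅ n, K n : Subgroup G).Normal ∧
      TopologicalSpace.MetrizableSpace (G ⧸ (⨅ n, K n : Subgroup G)) :=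
  countable_inter_of_compact_normal_metrizable_general K hK
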